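/- Let (B, L, θ) be a Boolean dynamical system and M the set of all maximal tails of B. For A ∈ B let U_A = {T ∈ M : A ∈ T}. Then {U_A : A ∈ B} is a basis of compact open sets for a topology on M, and for any subset S ⊆ M the closure of S in this topology equals {T ∈ M : T ⊆ ∪_{S'∈S} S'}. -/

import Mathlib

/-- An ideal of a (generalized) Boolean algebra: a non-empty subset closed under
union and under intersection with arbitrary elements. -/
def IsBoolIdeal {B : Type*} [GeneralizedBooleanAlgebra B] (I : Set B) : Prop :=
  I.Nonempty ∧ (∀ a ∈ I, ∀ b ∈ I, a ⊔ b ∈ I) ∧ (∀ a ∈ I, ∀ b : B, a ⊓ b ∈ I)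

/-- A filter in a (generalized) Boolean algebra. -/
def IsBoolFilter {B : Type*} [GeneralizedBooleanAlgebra B] (ξ : Set B) : Prop :=
  ξ.Nonempty ∧ ⊥ ∉ ξ ∧ (∀ a ∈ ξ, ∀ b : B, a ≤ b → b ∈ ξ) ∧ (∀ a ∈ ξ, ∀ b ∈ ξ, a ⊓ b ∈ ξ)

/-- An ultrafilter of a (generalized) Boolean algebra. -/
def IsBoolUltrafilter {B : Type*} [GeneralizedBooleanAlgebra B] (ξ : Set B) : Prop :=
  IsBoolFilter ξ ∧ ∀ a ∈ ξ, ∀ b b' : B, a = b ⊔ b' → b ∈ ξ ∨ b' ∈ ξ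

/-- The relation `A ~ B ⟺ A ∪ A' = B ∪ B'` for some `A', B' ∈ I`. -/
def relI {B : Type*} [GeneralizedBooleanAlgebra B] (I : Set B) (a b : B) : Prop :=
  ∃ a' ∈ I, ∃ b' ∈ I, a ⊔ a' = b ⊔ b'

/-- The action of a finite word `α ∈ L*`: `θ_α = θ_{α_n} ∘ ⋯ ∘ θ_{α_1}`. -/
def wordAct {B L : Type*} (θ : L → B → B) (α : List L) (A : B) : B :=
  α.foldl (fun x a => θ a x) A

/-- `α^k`: the word `α` concatenated with itself `k` times. -/
def wordPow {L : Type*} (α : List L) (k : ℕ) : List L := (List.replicate k α).flatten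

/-- A Boolean dynamical system: a Boolean algebra `B`, a set `L`, and actions
`θ_a` on `B` (Boolean homomorphisms with `θ_a ⊥ = ⊥`) such that each word
action has compact range and closed domain. -/
structure BoolDynSys (B L : Type*) [GeneralizedBooleanAlgebra B] where
  θ : L → B → B
  map_inf : ∀ (a : L) (A A' : B), θ a (A ⊓ A') = θ a A ⊓ θ a A'
  map_sup : ∀ (a : L) (A A' : B), θ a (A ⊔ A') = θ a A ⊔ θ a A'
  map_sdiff : ∀ (a : L) (A A' : B), θ a (A \ A') = θ a A \ θ a A'
  map_bot : ∀ a : L, θ a ⊥ = ⊥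
  compactRange : ∀ α : List L, α ≠ [] → ∃ R : B, IsLUB (Set.range (wordAct θ α)) R
  closedDomain : ∀ α : List L, α ≠ [] → ∀ R : B, IsLUB (Set.range (wordAct θ α)) R →
      ∃ D : B, wordAct θ α D = R

section BDS
variable {B L : Type*} [GeneralizedBooleanAlgebra B]

/-- `Δ_A = {a ∈ L : θ_a(A) ≠ ∅}`. -/
def DeltaSet (S : BoolDynSys B L) (A : B) : Set L := {a : L | S.θ a A ≠ ⊥}

/-- `A` is regular if every non-empty `C ⊆ A` has `0 < |Δ_C| < ∞`. -/
def RegularElt (S : BoolDynSys B L) (A : B) : Prop :=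
  ∀ C : B, C ≤ A → C ≠ ⊥ → (DeltaSet S C).Finite ∧ (DeltaSet S C).Nonempty

/-- An ultrafilter cycle `(α, η)`: `θ_α(A) ∈ η` for all `A ∈ η`. -/
def IsUFCycle (S : BoolDynSys B L) (α : List L) (η : Set B) : Prop :=
  α ≠ [] ∧ IsBoolUltrafilter η ∧ ∀ A ∈ η, wordAct S.θ α A ∈ η

/-- A cycle `(α, A)`: `θ_α(C) = C` for all `C ⊆ A`. -/
def IsCycle (S : BoolDynSys B L) (α : List L) (A : B) : Prop :=
  α ≠ [] ∧ A ≠ ⊥ ∧ ∀ C : B, C ≤ A → wordAct S.θ α C = C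

/-- The cycle `(α, A)` has no exits: for all `t ≤ |α|` and all non-empty
`C ⊆ θ_{α₁⋯α_t}(A)`, `C` is regular with `Δ_C = {α_{t+1}}` (indices mod `|α|`). -/
def NoExits (S : BoolDynSys B L) (α : List L) (A : B) : Prop :=
  ∀ t : ℕ, ∀ _h1 : 1 ≤ t, ∀ h2 : t ≤ α.length, ∀ C : B, C ≠ ⊥ →
    C ≤ wordAct S.θ (α.take t) A →
    RegularElt S C ∧
      DeltaSet S C = {α.get ⟨t % α.length, Nat.mod_lt t (Nat.lt_of_lt_of_le _h1 h2)⟩}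

/-- The cycle `(α, A)` has an exit. -/
def HasExit (S : BoolDynSys B L) (α : List L) (A : B) : Prop :=
  ∃ t : ℕ, ∃ _h1 : 1 ≤ t, ∃ h2 : t ≤ α.length, ∃ C : B, C ≠ ⊥ ∧
    C ≤ wordAct S.θ (α.take t) A ∧
    DeltaSet S C ≠ {α.get ⟨t % α.length, Nat.mod_lt t (Nat.lt_of_lt_of_le _h1 h2)⟩}

/-- Condition (L): every cycle has an exit. -/
def ConditionL (S : BoolDynSys B L) : Prop :=
  ∀ (α : List L) (A : B), IsCycle S α A → HasExit S α A

/-- A hereditary subset: closed under the actions. -/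
def IsHereditary (S : BoolDynSys B L) (H : Set B) : Prop :=
  ∀ A ∈ H, ∀ a : L, S.θ a A ∈ H

/-- A saturated subset: `A ∈ H` whenever `A` is regular and `θ_a(A) ∈ H` for all `a`. -/
def IsSaturated (S : BoolDynSys B L) (H : Set B) : Prop :=
  ∀ A : B, RegularElt S A → (∀ a : L, S.θ a A ∈ H) → A ∈ H

/-- A maximal tail: conditions (T0)–(T5). -/
def IsMaximalTail (S : BoolDynSys B L) (T : Set B) : Prop :=
  T.Nonempty ∧
  (⊥ ∉ T) ∧
  (∀ A : B, ∀ a : L, S.θ a A ∈ T → A ∈ T) ∧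
  (∀ A C : B, A ⊔ C ∈ T → A ∈ T ∨ C ∈ T) ∧
  (∀ A ∈ T, ∀ C : B, A ≤ C → C ∈ T) ∧
  (∀ A ∈ T, RegularElt S A → ∃ a : L, S.θ a A ∈ T) ∧
  (∀ A₁ ∈ T, ∀ A₂ ∈ T, ∃ C ∈ T,
      (∃ α : List L, C ≤ wordAct S.θ α A₁) ∧ (∃ β : List L, C ≤ wordAct S.θ β A₂))

/-- A cyclic maximal tail. -/
def IsCyclicMaximalTail (S : BoolDynSys B L) (T : Set B) : Prop :=
  IsMaximalTail S T ∧
  ∃ (α : List L) (η : Set B) (A : B), IsUFCycle S α η ∧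
    T = {C : B | ∃ β : List L, wordAct S.θ β C ∈ η} ∧ A ∈ η ∧
    ∀ β : List L, β ≠ [] → ∀ C : B, C ≤ A → wordAct S.θ β C ∈ η →
      C ∈ η ∧ ∃ k : ℕ, 0 < k ∧ β = wordPow α k

/-- Condition (K). -/
def ConditionK (S : BoolDynSys B L) : Prop :=
  ¬ ∃ (α : List L) (η : Set B) (A : B), IsUFCycle S α η ∧ A ∈ η ∧
    ∀ β : List L, β ≠ [] → ∀ C : B, C ≤ A → wordAct S.θ β C ∈ η →
      C ∈ η ∧ ∃ k : ℕ, 0 < k ∧ β = wordPow α k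

/-! Notions for the quotient Boolean dynamical system `(B/H, L, θ)` (for a
hereditary saturated ideal `H`), expressed in terms of representatives in `B`. -/

/-- `[C] ⊆ [B']` in `B/H`. -/
def qle (H : Set B) (C A : B) : Prop := ∃ W ∈ H, C ≤ A ⊔ W

/-- `Δ_{[C]}` in `B/H`. -/
def QDelta (S : BoolDynSys B L) (H : Set B) (C : B) : Set L := {a : L | S.θ a C ∉ H}

/-- `[A]` is regular in `B/H`. -/
def QRegular (S : BoolDynSys B L) (H : Set B) (A : B) : Prop :=
  ∀ C : B, C ∉ H → qle H C A → (QDelta S H C).Finite ∧ (QDelta S H C).Nonempty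

/-- `(α, [A])` is a cycle in the quotient `(B/H, L, θ)`. -/
def QCycle (S : BoolDynSys B L) (H : Set B) (α : List L) (A : B) : Prop :=
  α ≠ [] ∧ A ∉ H ∧ ∀ C : B, qle H C A → relI H (wordAct S.θ α C) C

/-- The cycle `(α, [A])` has an exit in the quotient `(B/H, L, θ)`. -/
def QHasExit (S : BoolDynSys B L) (H : Set B) (α : List L) (A : B) : Prop :=
  ∃ t : ℕ, ∃ _h1 : 1 ≤ t, ∃ h2 : t ≤ α.length, ∃ C : B, C ∉ H ∧
    qle H C (wordAct S.θ (α.take t) A) ∧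
    QDelta S H C ≠ {α.get ⟨t % α.length, Nat.mod_lt t (Nat.lt_of_lt_of_le _h1 h2)⟩}

/-- The quotient `(B/H, L, θ)` satisfies Condition (L). -/
def QConditionL (S : BoolDynSys B L) (H : Set B) : Prop :=
  ∀ (α : List L) (A : B), QCycle S H α A → QHasExit S H α A

end BDS

/-- The set of all maximal tails of `(B, L, θ)`. -/
def TailSpace {B L : Type*} [GeneralizedBooleanAlgebra B] (S : BoolDynSys B L) :
    Type _ := {T : Set B // IsMaximalTail S T}

/-- `U_A = {T ∈ M : A ∈ T}`. -/
def USet {B L : Type*} [GeneralizedBooleanAlgebra B] (S : BoolDynSys B L) (A : B) :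
    Set (TailSpace S) := {T : TailSpace S | A ∈ T.1}

/-- The topology on the set of maximal tails generated by `{U_A : A ∈ B}`. -/
instance {B L : Type*} [GeneralizedBooleanAlgebra B] (S : BoolDynSys B L) :
    TopologicalSpace (TailSpace S) :=
  TopologicalSpace.generateFrom {s : Set (TailSpace S) | ∃ A : B, s = USet S A}


/-! A tail that only satisfies (T0)–(T4) still contains a maximal tail through any of its
elements: by Zorn's lemma take a minimal such tail `m` containing `A`; for `A₀ ∈ m` the
elements of `m` having a common descendant in `m` with `A₀` again form such a tail, so by
minimality they exhaust `m`, which is (T5). Conditions (T0)–(T4) pass to the family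
`{C | U_C ∈ F}` of an ultrafilter `F` on `U_A` (for (T4) because `Δ_C` is finite), and a
maximal tail inside that family is a limit of `F`; hence `U_A` is compact. -/

open TopologicalSpace

theorem Directed.nonempty_iInter_of_finite {ι α : Type*} [Nonempty ι] {f : ι → Set α}
    (hd : Directed (· ⊇ ·) f) (hfin : ∀ i, (f i).Finite) (hne : ∀ i, (f i).Nonempty) :
    (⋂ i, f i).Nonempty := by
  let _ : TopologicalSpace α := ⊥
  have : DiscreteTopology α := ⟨rfl⟩
  exact IsCompact.nonempty_iInter_of_directed_nonempty_isCompact_isClosed f hd hne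
    (fun i => (hfin i).isCompact) (fun i => isClosed_discrete _)

section WordAct

variable {B L : Type*} {θ : L → B → B}

theorem wordAct_append (α β : List L) (A : B) :
    wordAct θ (α ++ β) A = wordAct θ β (wordAct θ α A) :=
  List.foldl_append

theorem wordAct_mono [Preorder B] (hθ : ∀ a, Monotone (θ a)) (α : List L) :
    Monotone (wordAct θ α) := by
  induction α with
  | nil => exact monotone_id
  | cons a α ih => exact ih.comp (hθ a)

theorem wordAct_sup [Max B] (hθ : ∀ a x y, θ a (x ⊔ y) = θ a x ⊔ θ a y) (α : List L) (x y : B) :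
    wordAct θ α (x ⊔ y) = wordAct θ α x ⊔ wordAct θ α y := by
  induction α generalizing x y with
  | nil => rfl
  | cons a α ih => exact (congrArg (wordAct θ α) (hθ a x y)).trans (ih _ _)

end WordAct

section TailSpace

variable {B L : Type*} [GeneralizedBooleanAlgebra B] {S : BoolDynSys B L}

theorem BoolDynSys.monotone_θ (S : BoolDynSys B L) (a : L) : Monotone (S.θ a) :=
  Monotone.of_map_sup (S.map_sup a)

theorem BoolDynSys.monotone_wordAct (S : BoolDynSys B L) (α : List L) :
    Monotone (wordAct S.θ α) :=
  wordAct_mono S.monotone_θ α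

theorem RegularElt.mono {A C : B} (hA : RegularElt S A) (hCA : C ≤ A) : RegularElt S C :=
  fun D hDC hD => hA D (hDC.trans hCA) hD

/-- Conditions (T0)–(T4) of a maximal tail. -/
structure IsPreTail (S : BoolDynSys B L) (T : Set B) : Prop where
  bot_notMem : ⊥ ∉ T
  mem_of_θ_mem {A : B} (a : L) : S.θ a A ∈ T → A ∈ T
  mem_or_mem_of_sup_mem {A C : B} : A ⊔ C ∈ T → A ∈ T ∨ C ∈ T
  mem_of_le {A C : B} : A ∈ T → A ≤ C → C ∈ T
  exists_θ_mem {A : B} : A ∈ T → RegularElt S A → ∃ a : L, S.θ a A ∈ T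

/-- `A₁` and `A₂` have a common descendant in `T`, as (T5) requires of all `A₁, A₂ ∈ T`. -/
def Confluent (S : BoolDynSys B L) (T : Set B) (A₁ A₂ : B) : Prop :=
  ∃ C ∈ T, (∃ α : List L, C ≤ wordAct S.θ α A₁) ∧ (∃ β : List L, C ≤ wordAct S.θ β A₂)

theorem isMaximalTail_iff {T : Set B} :
    IsMaximalTail S T ↔
      T.Nonempty ∧ IsPreTail S T ∧ ∀ A₁ ∈ T, ∀ A₂ ∈ T, Confluent S T A₁ A₂ :=
  ⟨fun ⟨hne, h0, h1, h2, h3, h4, h5⟩ =>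
      ⟨hne, ⟨h0, fun a => h1 _ a, h2 _ _, fun hA => h3 _ hA _, h4 _⟩, h5⟩,
    fun ⟨hne, ⟨h0, h1, h2, h3, h4⟩, h5⟩ =>
      ⟨hne, h0, fun _ a => h1 a, fun _ _ => h2, fun _ hA _ => h3 hA, fun _ => h4, h5⟩⟩

theorem IsMaximalTail.isPreTail {T : Set B} (hT : IsMaximalTail S T) : IsPreTail S T :=
  (isMaximalTail_iff.1 hT).2.1

namespace IsPreTail

variable {T : Set B} (hT : IsPreTail S T)
include hT

theorem mem_of_wordAct_mem {A : B} (α : List L) (h : wordAct S.θ α A ∈ T) : A ∈ T := by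
  induction α generalizing A with
  | nil => exact h
  | cons a α ih => exact hT.mem_of_θ_mem a (ih h)

theorem mem_of_le_wordAct {A D : B} {α : List L} (hD : D ∈ T) (h : D ≤ wordAct S.θ α A) :
    A ∈ T :=
  hT.mem_of_wordAct_mem α (hT.mem_of_le hD h)

theorem mem_of_confluent {A₁ A₂ : B} (h : Confluent S T A₁ A₂) : A₂ ∈ T :=
  let ⟨_, hD, _, _, hβ⟩ := h
  hT.mem_of_le_wordAct hD hβ

end IsPreTail

theorem Confluent.symm {T : Set B} {A₁ A₂ : B} (h : Confluent S T A₁ A₂) :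
    Confluent S T A₂ A₁ :=
  let ⟨D, hD, hα, hβ⟩ := h
  ⟨D, hD, hβ, hα⟩

theorem confluent_self {T : Set B} {A : B} (hA : A ∈ T) : Confluent S T A A :=
  ⟨A, hA, ⟨[], le_rfl⟩, ⟨[], le_rfl⟩⟩

theorem Confluent.of_θ {T : Set B} {C A : B} {a : L} (h : Confluent S T C (S.θ a A)) :
    Confluent S T C A :=
  let ⟨D, hD, hα, β, hβ⟩ := h
  ⟨D, hD, hα, a :: β, hβ⟩

theorem Confluent.mono_right {T : Set B} {C A A' : B} (h : Confluent S T C A) (hA : A ≤ A') :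
    Confluent S T C A' :=
  let ⟨D, hD, hα, β, hβ⟩ := h
  ⟨D, hD, hα, β, hβ.trans (S.monotone_wordAct β hA)⟩

theorem IsPreTail.confluent_or_of_confluent_sup {T : Set B} (hT : IsPreTail S T) {C A A' : B}
    (h : Confluent S T C (A ⊔ A')) : Confluent S T C A ∨ Confluent S T C A' := by
  obtain ⟨D, hD, ⟨α, hα⟩, β, hβ⟩ := h
  rw [wordAct_sup S.map_sup] at hβ
  have hsplit : (D ⊓ wordAct S.θ β A) ⊔ (D ⊓ wordAct S.θ β A') ∈ T := by
    rwa [← inf_sup_left, inf_eq_left.2 hβ]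
  refine (hT.mem_or_mem_of_sup_mem hsplit).imp ?_ ?_ <;>
    exact fun hE => ⟨_, hE, ⟨α, inf_le_left.trans hα⟩, β, inf_le_right⟩

/-- If the common descendant `D` lies below `A` itself, the letter comes from (T4) in `T`
applied to `D`, which is regular as `A` is. -/
theorem IsPreTail.exists_confluent_θ {T : Set B} (hT : IsPreTail S T) {C A : B}
    (h : Confluent S T C A) (hA : RegularElt S A) : ∃ a : L, Confluent S T C (S.θ a A) := by
  obtain ⟨D, hD, ⟨α, hα⟩, β, hβ⟩ := h
  cases β with
  | cons b β => exact ⟨b, D, hD, ⟨α, hα⟩, β, hβ⟩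
  | nil =>
    obtain ⟨a, ha⟩ := hT.exists_θ_mem hD (hA.mono hβ)
    refine ⟨a, S.θ a D, ha, ⟨α ++ [a], ?_⟩, [], S.monotone_θ a hβ⟩
    rw [wordAct_append]
    exact S.monotone_θ a hα

def confluentSet (S : BoolDynSys B L) (T : Set B) (C : B) : Set B := {A | Confluent S T C A}

theorem IsPreTail.confluentSet_subset {T : Set B} (hT : IsPreTail S T) (C : B) :
    confluentSet S T C ⊆ T :=
  fun _ => hT.mem_of_confluent

theorem isPreTail_confluentSet {T : Set B} (hT : IsPreTail S T) (C : B) :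
    IsPreTail S (confluentSet S T C) where
  bot_notMem h := hT.bot_notMem (hT.confluentSet_subset C h)
  mem_of_θ_mem _ := Confluent.of_θ
  mem_or_mem_of_sup_mem := hT.confluent_or_of_confluent_sup
  mem_of_le := Confluent.mono_right
  exists_θ_mem := hT.exists_confluent_θ

theorem IsPreTail.sInter {c : Set (Set B)} (hc : IsChain (· ⊆ ·) c) (hne : c.Nonempty)
    (h : ∀ T ∈ c, IsPreTail S T) : IsPreTail S (⋂₀ c) where
  bot_notMem hbot := let ⟨T, hT⟩ := hne; (h T hT).bot_notMem (hbot T hT)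
  mem_of_θ_mem a hA T hT := (h T hT).mem_of_θ_mem a (hA T hT)
  mem_or_mem_of_sup_mem {A C} hAC := by
    refine or_iff_not_imp_left.2 fun hA T hT => ?_
    obtain ⟨T₁, hT₁, hAT₁⟩ : ∃ T₁ ∈ c, A ∉ T₁ := by
      simpa only [Set.mem_sInter, not_forall, exists_prop] using hA
    rcases hc.total hT₁ hT with hT₁T | hTT₁
    · exact hT₁T (((h T₁ hT₁).mem_or_mem_of_sup_mem (hAC T₁ hT₁)).resolve_left hAT₁)
    · exact ((h T hT).mem_or_mem_of_sup_mem (hAC T hT)).resolve_left fun hAT => hAT₁ (hTT₁ hAT)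
  mem_of_le hA hAC T hT := (h T hT).mem_of_le (hA T hT) hAC
  exists_θ_mem {A} hA hreg := by
    obtain ⟨T₀, hT₀⟩ := hne
    have : Nonempty c := ⟨⟨T₀, hT₀⟩⟩
    have hA₀ : A ≠ ⊥ := fun hbot => (h T₀ hT₀).bot_notMem (hbot ▸ hA T₀ hT₀)
    let letters : c → Set L := fun T => {a | S.θ a A ∈ T.1}
    have hdir : Directed (· ⊇ ·) letters := by
      rintro ⟨T₁, hT₁⟩ ⟨T₂, hT₂⟩
      rcases hc.total hT₁ hT₂ with h₁₂ | h₂₁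
      · exact ⟨⟨T₁, hT₁⟩, subset_rfl, fun _ ha => h₁₂ ha⟩
      · exact ⟨⟨T₂, hT₂⟩, fun _ ha => h₂₁ ha, subset_rfl⟩
    have hfin : ∀ T, (letters T).Finite := fun T =>
      (hreg A le_rfl hA₀).1.subset fun a ha hbot => (h T.1 T.2).bot_notMem (hbot ▸ ha)
    have hnon : ∀ T, (letters T).Nonempty := fun T =>
      (h T.1 T.2).exists_θ_mem (hA T.1 T.2) hreg
    obtain ⟨a, ha⟩ := hdir.nonempty_iInter_of_finite hfin hnon
    exact ⟨a, fun T hT => Set.mem_iInter.1 ha ⟨T, hT⟩⟩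

theorem IsPreTail.exists_isMaximalTail_subset {T : Set B} (hT : IsPreTail S T) {A : B}
    (hA : A ∈ T) : ∃ m, IsMaximalTail S m ∧ m ⊆ T ∧ A ∈ m := by
  obtain ⟨m, hmT, hm⟩ := zorn_superset_nonempty {T' | IsPreTail S T' ∧ A ∈ T'}
    (fun c hc hchain hne => ⟨⋂₀ c,
      ⟨IsPreTail.sInter hchain hne fun T' hT' => (hc hT').1, fun T' hT' => (hc hT').2⟩,
      fun _ => Set.sInter_subset_of_mem⟩) T ⟨hT, hA⟩
  obtain ⟨hmpre, hmA⟩ := hm.prop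
  have hfull : ∀ C, Confluent S m C A → confluentSet S m C = m := fun C hC =>
    hm.eq_of_subset ⟨isPreTail_confluentSet hmpre C, hC⟩ (hmpre.confluentSet_subset C)
  refine ⟨m, isMaximalTail_iff.2 ⟨⟨A, hmA⟩, hmpre, fun A₁ hA₁ A₂ hA₂ => ?_⟩, hmT, hmA⟩
  have hAA₁ : Confluent S m A A₁ := (hfull A (confluent_self hmA)).ge hA₁
  exact (hfull A₁ hAA₁.symm).ge hA₂

theorem uSet_bot : USet S ⊥ = ∅ :=
  Set.eq_empty_of_forall_notMem fun T => T.2.isPreTail.bot_notMem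

theorem uSet_subset_of_le_wordAct {A C : B} {α : List L} (h : C ≤ wordAct S.θ α A) :
    USet S C ⊆ USet S A :=
  fun T hT => T.2.isPreTail.mem_of_le_wordAct hT h

theorem isTopologicalBasis_uSet :
    IsTopologicalBasis {s : Set (TailSpace S) | ∃ A : B, s = USet S A} where
  exists_subset_inter := by
    rintro _ ⟨A₁, rfl⟩ _ ⟨A₂, rfl⟩ T ⟨h₁, h₂⟩
    obtain ⟨C, hC, ⟨α, hα⟩, β, hβ⟩ := (isMaximalTail_iff.1 T.2).2.2 A₁ h₁ A₂ h₂
    exact ⟨USet S C, ⟨C, rfl⟩, hC,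
      Set.subset_inter (uSet_subset_of_le_wordAct hα) (uSet_subset_of_le_wordAct hβ)⟩
  sUnion_eq := Set.eq_univ_of_forall fun T =>
    let ⟨A, hA⟩ := (isMaximalTail_iff.1 T.2).1
    ⟨USet S A, ⟨A, rfl⟩, hA⟩
  eq_generateFrom := rfl

theorem isPreTail_setOf_uSet_mem (F : Ultrafilter (TailSpace S)) :
    IsPreTail S {C | USet S C ∈ F} where
  bot_notMem h := F.empty_notMem (uSet_bot (S := S) ▸ h)
  mem_of_θ_mem a h := F.mem_of_superset h (uSet_subset_of_le_wordAct (α := [a]) le_rfl)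
  mem_or_mem_of_sup_mem h := Ultrafilter.union_mem_iff.1 <| F.mem_of_superset h
    fun T hT => T.2.isPreTail.mem_or_mem_of_sup_mem hT
  mem_of_le h hAC := F.mem_of_superset h (uSet_subset_of_le_wordAct (α := []) hAC)
  exists_θ_mem {A} h hreg := by
    have hA : A ≠ ⊥ := fun hbot => F.empty_notMem (uSet_bot (S := S) ▸ hbot ▸ h)
    have hcover : USet S A ⊆ ⋃ a ∈ DeltaSet S A, USet S (S.θ a A) := fun T hT =>
      let ⟨a, ha⟩ := T.2.isPreTail.exists_θ_mem hT hreg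
      Set.mem_biUnion (fun hbot => T.2.isPreTail.bot_notMem (hbot ▸ ha)) ha
    obtain ⟨a, -, ha⟩ :=
      (Ultrafilter.finite_biUnion_mem_iff (hreg A le_rfl hA).1).1 (F.mem_of_superset h hcover)
    exact ⟨a, ha⟩

theorem isCompact_uSet (A : B) : IsCompact (USet S A) := by
  refine isCompact_iff_ultrafilter_le_nhds'.2 fun F hA => ?_
  obtain ⟨m, hm, hmF, hAm⟩ := (isPreTail_setOf_uSet_mem F).exists_isMaximalTail_subset hA
  refine ⟨⟨m, hm⟩, hAm, isTopologicalBasis_uSet.nhds_hasBasis.ge_iff.2 ?_⟩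
  rintro _ ⟨⟨C, rfl⟩, hC⟩
  exact hmF hC

theorem closure_eq_setOf_subset_biUnion (s : Set (TailSpace S)) :
    closure s = {T : TailSpace S | T.1 ⊆ ⋃ T' ∈ s, T'.1} := by
  ext T
  rw [isTopologicalBasis_uSet.mem_closure_iff]
  constructor
  · intro h C hC
    obtain ⟨T', hT'C, hT's⟩ := h _ ⟨C, rfl⟩ hC
    exact Set.mem_biUnion hT's hT'C
  · rintro h _ ⟨C, rfl⟩ hC
    obtain ⟨T', hT's, hT'C⟩ := Set.mem_iUnion₂.1 (h hC)
    exact ⟨T', hT'C, hT's⟩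

end TailSpace

/-- `{U_A : A ∈ B}` is a basis of compact open sets for a topology on the set `M`
of maximal tails, and the closure of any `S' ⊆ M` is `{T ∈ M : T ⊆ ∪_{S'' ∈ S'} S''}`. -/
theorem tail_space_topology {B L : Type*} [GeneralizedBooleanAlgebra B]
    (S : BoolDynSys B L) :
    TopologicalSpace.IsTopologicalBasis
      {s : Set (TailSpace S) | ∃ A : B, s = USet S A} ∧
    (∀ A : B, IsCompact (USet S A) ∧ IsOpen (USet S A)) ∧
    (∀ Srm : Set (TailSpace S),
      closure Srm = {T : TailSpace S | T.1 ⊆ ⋃ T' ∈ Srm, T'.1}) :=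
  ⟨isTopologicalBasis_uSet,
    fun A => ⟨isCompact_uSet A, isTopologicalBasis_uSet.isOpen ⟨A, rfl⟩⟩,
    closure_eq_setOf_subset_biUnion⟩
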